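/- Let p > 3 be prime, let u, v, k be integers as in the twisted curve C_k: y^p = x(x−3uk)(x−9vk), and let ℓ ≡ 1 (mod p) be a prime not dividing 6puv(u−3v) such that ℓ divides k exactly once and all other prime factors of 3uvk(u−3v) are p-th powers in ℚ_ℓ^×; then with D₀ = [(0,0)−∞] and D₁ = [(3uk,0)−∞], where ∂^D(D₀) = −3^{-2}v^{-1}k^{-1} and ∂^D(D₁) = 3^{-1}(u−3v)^{-1}k^{-1} modulo p-th powers, the element ∂^D(D₀)·∂^D(D₁)^{-2} ∈ ℚ_ℓ^×/(ℚ_ℓ^×)^p equals the class of ℓ. -/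

import Mathlib

/-- The group `ℚ_ℓ^×/(ℚ_ℓ^×)^p`. -/
abbrev PadicModPthPowers (p ℓ : ℕ) [Fact ℓ.Prime] : Type :=
  ℚ_[ℓ]ˣ ⧸ (powMonoidHom p : ℚ_[ℓ]ˣ →* ℚ_[ℓ]ˣ).range

/-- The class map `ℚ_ℓ^× → ℚ_ℓ^×/(ℚ_ℓ^×)^p`. -/
noncomputable def padicClass (p ℓ : ℕ) [Fact ℓ.Prime] :
    ℚ_[ℓ]ˣ →* PadicModPthPowers p ℓ :=
  QuotientGroup.mk' _


lemma natP (p ℓ : ℕ) [Fact ℓ.Prime] (n : ℕ) :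
    n ≠ 0 → (∀ q : ℕ, q.Prime → q ∣ n → ∃ x : ℚ_[ℓ], x ^ p = (q : ℚ_[ℓ])) →
    ∃ x : ℚ_[ℓ], x ^ p = (n : ℚ_[ℓ]) := by
  induction n using Nat.recOnMul with
  | zero => intro h; exact absurd rfl h
  | one => intro _ _; exact ⟨1, by simp⟩
  | prime q hq => intro _ h; exact h q hq dvd_rfl
  | mul a b ha hb =>
    intro hab h
    obtain ⟨x, hx⟩ := ha (left_ne_zero_of_mul hab) (fun q hq hd => h q hq (hd.mul_right b))
    obtain ⟨y, hy⟩ := hb (right_ne_zero_of_mul hab) (fun q hq hd => h q hq (hd.mul_left a))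
    exact ⟨x * y, by push_cast; rw [mul_pow, hx, hy]⟩

lemma intP (p ℓ : ℕ) [Fact ℓ.Prime] (hodd : Odd p) (n : ℤ) (hn : n ≠ 0)
    (h : ∀ q : ℕ, q.Prime → (q : ℤ) ∣ n → ∃ x : ℚ_[ℓ], x ^ p = (q : ℚ_[ℓ])) :
    ∃ x : ℚ_[ℓ], x ^ p = (n : ℚ_[ℓ]) := by
  obtain ⟨x, hx⟩ := natP p ℓ n.natAbs (by simpa using hn)
    (fun q hq hd => h q hq ((Int.natCast_dvd_natCast.mpr hd).trans (Int.natAbs_dvd.mpr dvd_rfl)))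
  rcases Int.natAbs_eq n with h1 | h1
  · refine ⟨x, ?_⟩
    rw [hx]
    conv_rhs => rw [h1]
    rw [Int.cast_natCast]
  · refine ⟨-x, ?_⟩
    rw [hodd.neg_pow, hx]
    conv_rhs => rw [h1]
    rw [Int.cast_neg, Int.cast_natCast]


/-- Let `ℓ ≡ 1 (mod p)` be a prime not dividing `6puv(u−3v)`, where
`p > 3` is prime and `u, v, k` are nonzero integers as in the twisted curve
`y^p = x(x−3uk)(x−9vk)` with Jacobian `J` and torsion points `D₀ = [(0,0)−∞]`,
`D₁ = [(3uk,0)−∞]`.  Given the values of the descent map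
`∂^D(D₀) = −3^{-2}v^{-1}k^{-1}` and `∂^D(D₁) = 3^{-1}(u−3v)^{-1}k^{-1}` modulo `p`-th
powers in `ℚ_ℓ^×`, if `ℓ` divides `k` exactly once and every other prime factor of
`3uvk(u−3v)` is a `p`-th power in `ℚ_ℓ^×`, then
`∂^D(D₀)·∂^D(D₁)^{-2}` equals the class of `ℓ` in `ℚ_ℓ^×/(ℚ_ℓ^×)^p`. -/
theorem descent_quotient_is_class_of_ell (p ℓ : ℕ) (hp : p.Prime) (hp3 : 3 < p)
    [Fact ℓ.Prime] (hmod : ℓ % p = 1)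
    (u v k : ℤ) (hu : u ≠ 0) (hv : v ≠ 0) (hk0 : k ≠ 0)
    (hℓdvd : ¬ (ℓ : ℤ) ∣ 6 * p * u * v * (u - 3 * v))
    (hℓk : (ℓ : ℤ) ∣ k) (hℓk2 : ¬ (ℓ : ℤ) ^ 2 ∣ k)
    (hothers : ∀ q : ℕ, q.Prime → (q : ℤ) ∣ 3 * u * v * k * (u - 3 * v) → q ≠ ℓ →
      ∃ x : ℚ_[ℓ], x ^ p = (q : ℚ_[ℓ]))
    (J : Type) [CommGroup J] (D₀ D₁ : J) (dD : J →* PadicModPthPowers p ℓ)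
    (w₀ w₁ L : ℚ_[ℓ]ˣ)
    (hw₀ : (w₀ : ℚ_[ℓ]) = -((3 : ℚ_[ℓ]) ^ 2 * (v : ℚ_[ℓ]) * (k : ℚ_[ℓ]))⁻¹)
    (hw₁ : (w₁ : ℚ_[ℓ]) = ((3 : ℚ_[ℓ]) * ((u : ℚ_[ℓ]) - 3 * v) * (k : ℚ_[ℓ]))⁻¹)
    (hL : (L : ℚ_[ℓ]) = (ℓ : ℚ_[ℓ]))
    (hD₀ : dD D₀ = padicClass p ℓ w₀) (hD₁ : dD D₁ = padicClass p ℓ w₁) :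
    dD D₀ * (dD D₁)⁻¹ ^ 2 = padicClass p ℓ L := by
  obtain ⟨m, hm⟩ := hℓk
  have hodd : Odd p := hp.odd_of_ne_two (by omega)
  have hp0 : p ≠ 0 := hp.ne_zero
  -- basic nondivisibility facts
  have hℓv : ¬ (ℓ : ℤ) ∣ v := fun h => hℓdvd ((h.mul_left (6 * p * u)).mul_right (u - 3 * v))
  have hℓuv : ¬ (ℓ : ℤ) ∣ (u - 3 * v) := fun h => hℓdvd (h.mul_left (6 * p * u * v))
  have huv0 : u - 3 * v ≠ 0 := fun h => hℓuv (h ▸ dvd_zero _)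
  have hm0 : m ≠ 0 := by rintro rfl; exact hk0 (by simpa using hm)
  have hℓm : ¬ (ℓ : ℤ) ∣ m := by
    rintro ⟨c, rfl⟩
    exact hℓk2 ⟨c, by rw [hm]; ring⟩
  -- p-th power witnesses
  have mk' : ∀ n : ℤ, n ≠ 0 → ¬ (ℓ : ℤ) ∣ n → n ∣ 3 * u * v * k * (u - 3 * v) →
      ∃ x : ℚ_[ℓ], x ^ p = (n : ℚ_[ℓ]) := by
    intro n hn hℓn hnd
    refine intP p ℓ hodd n hn (fun q hq hqd => hothers q hq (hqd.trans hnd) ?_)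
    rintro rfl
    exact hℓn hqd
  obtain ⟨a, ha⟩ := mk' (u - 3 * v) huv0 hℓuv (dvd_mul_left _ _)
  have hmk : m ∣ k := ⟨(ℓ : ℤ), by rw [hm]; ring⟩
  obtain ⟨b, hb⟩ := mk' m hm0 hℓm ((hmk.mul_left (3 * u * v)).mul_right (u - 3 * v))
  obtain ⟨c, hc⟩ := mk' v hv hℓv
    (((dvd_mul_left v (3 * u)).mul_right k).mul_right (u - 3 * v))
  -- nonzero casts
  have hvq : (v : ℚ_[ℓ]) ≠ 0 := Int.cast_ne_zero.mpr hv
  have hkq : (k : ℚ_[ℓ]) ≠ 0 := Int.cast_ne_zero.mpr hk0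
  have hmq : (m : ℚ_[ℓ]) ≠ 0 := Int.cast_ne_zero.mpr hm0
  have huvq : ((u : ℚ_[ℓ]) - 3 * v) ≠ 0 := by
    have h : ((u - 3 * v : ℤ) : ℚ_[ℓ]) ≠ 0 := Int.cast_ne_zero.mpr huv0
    push_cast at h; exact h
  have hℓq : (ℓ : ℚ_[ℓ]) ≠ 0 := Nat.cast_ne_zero.mpr (Fact.out (p := ℓ.Prime)).ne_zero
  have h3q : (3 : ℚ_[ℓ]) ≠ 0 := by
    have : ((3 : ℤ) : ℚ_[ℓ]) ≠ 0 := Int.cast_ne_zero.mpr (by norm_num)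
    simpa using this
  have hc0 : c ≠ 0 := by
    intro h; rw [h, zero_pow hp0] at hc; exact hvq hc.symm
  -- the value of the unit quotient
  have hval : ((w₀ * w₁⁻¹ ^ 2 * L⁻¹ : ℚ_[ℓ]ˣ) : ℚ_[ℓ])
      = -(((u : ℚ_[ℓ]) - 3 * v) ^ 2 * m / v) := by
    have hkm : (k : ℚ_[ℓ]) = (ℓ : ℚ_[ℓ]) * m := by rw [hm]; push_cast; ring
    rw [Units.val_mul, Units.val_mul, Units.val_pow_eq_pow_val, Units.val_inv_eq_inv_val,
      Units.val_inv_eq_inv_val, hw₀, hw₁, hL, hkm]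
    field_simp
  -- construct the p-th power witness unit
  set x : ℚ_[ℓ] := (-1) * a ^ 2 * b * c⁻¹ with hxdef
  have hxp : x ^ p = ((w₀ * w₁⁻¹ ^ 2 * L⁻¹ : ℚ_[ℓ]ˣ) : ℚ_[ℓ]) := by
    rw [hval, hxdef]
    rw [mul_pow, mul_pow, mul_pow, ← pow_mul, mul_comm 2 p, pow_mul, ha, hb, inv_pow, hc,
      hodd.neg_one_pow]
    field_simp
    push_cast; ring
  have hx0 : x ≠ 0 := by
    intro h
    rw [h, zero_pow hp0] at hxp
    exact (w₀ * w₁⁻¹ ^ 2 * L⁻¹).ne_zero hxp.symm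
  have key : w₀ * w₁⁻¹ ^ 2 * L⁻¹ ∈ (powMonoidHom p : ℚ_[ℓ]ˣ →* ℚ_[ℓ]ˣ).range := by
    refine ⟨Units.mk0 x hx0, Units.ext ?_⟩
    simpa [powMonoidHom] using hxp
  rw [hD₀, hD₁, ← map_inv, ← map_pow, ← map_mul]
  symm
  rw [padicClass, QuotientGroup.mk'_eq_mk']
  refine ⟨L⁻¹ * (w₀ * w₁⁻¹ ^ 2), ?_, by group⟩
  rw [mul_comm]; exact key
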